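/- arXiv:2308.03178 — 2 statements merged into one kernel-verified Lean document; each statement's English description precedes it below -/
import Mathlib

section
/- Let X be a real Banach space and let F : [0,1] → 2^X \ {∅} be a bounded multifunction. Then the following conditions are equivalent: (i) I(F) ⊆ I(conv F); (ii) every element of I(F) is a convex set. -/
open Pointwise Filter Metric Set

/-- A tagged partition of `[0,1]` into finitely many segments with tags. -/
structure TaggedPartition where
  n : ℕ
  pt : Fin (n + 1) → ℝ
  tag : Fin n → ℝ
  pt_zero : pt 0 = 0
  pt_last : pt (Fin.last n) = 1
  pt_mono : Monotone pt
  tag_mem : ∀ i : Fin n, tag i ∈ Set.Icc (pt i.castSucc) (pt i.succ)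

/-- The diameter (mesh) of a tagged partition. -/
noncomputable def TaggedPartition.mesh (P : TaggedPartition) : ℝ :=
  ⨆ i : Fin P.n, (P.pt i.succ - P.pt i.castSucc)

/-- Riemann integral sum of a multifunction, using Minkowski sums and
pointwise scalar multiples of sets. -/
noncomputable def msum {X : Type*} [NormedAddCommGroup X] [NormedSpace ℝ X]
    (F : ℝ → Set X) (P : TaggedPartition) : Set X :=
  ∑ i : Fin P.n, (P.pt i.succ - P.pt i.castSucc) • F (P.tag i)

/-- The set `I(F)` of limits of Riemann integral sums of a multifunction `F`:
all closed nonempty subsets that are Hausdorff-distance limits of sequences of Riemann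
sums along sequences of tagged partitions whose diameters tend to `0`. -/
def limitSets {X : Type*} [NormedAddCommGroup X] [NormedSpace ℝ X]
    (F : ℝ → Set X) : Set (Set X) :=
  {A | A.Nonempty ∧ IsClosed A ∧ ∃ P : ℕ → TaggedPartition,
    Tendsto (fun k => (P k).mesh) atTop (nhds 0) ∧
    Tendsto (fun k => EMetric.hausdorffEdist (msum F (P k)) A) atTop (nhds 0)}

/-!
The Riemann sums of `conv F` are the convex hulls of the Riemann sums of `F`, since Minkowski
sums and scalings commute with convex hulls. If `I(F) ⊆ I(conv F)`, every element of `I(F)` is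
a closed Hausdorff limit of convex sets, hence convex. Conversely, taking convex hulls does not
increase Hausdorff distances, so the convex hulls of Riemann sums converging to a convex `A`
converge to `A` as well.
-/

section PseudoEMetric

variable {α : Type*} [PseudoEMetricSpace α]

lemma subset_cthickening_of_hausdorffEDist_le {s t : Set α} {δ : ℝ}
    (h : hausdorffEDist s t ≤ ENNReal.ofReal δ) : s ⊆ cthickening δ t :=
  fun _ hx => mem_cthickening_iff.2 ((infEDist_le_hausdorffEDist_of_mem hx).trans h)

end PseudoEMetric

section NormedSpace

variable {X : Type*} [NormedAddCommGroup X] [NormedSpace ℝ X]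

lemma msum_convexHull (F : ℝ → Set X) (P : TaggedPartition) :
    msum (fun t => convexHull ℝ (F t)) P = convexHull ℝ (msum F P) := by
  simp only [msum, convexHull_sum, convexHull_smul]

lemma convexHull_subset_cthickening_convexHull {s t : Set X} {δ : ℝ}
    (h : s ⊆ cthickening δ t) : convexHull ℝ s ⊆ cthickening δ (convexHull ℝ t) :=
  convexHull_min (h.trans (cthickening_subset_of_subset δ (subset_convexHull ℝ t)))
    ((convex_convexHull ℝ t).cthickening δ)

lemma infEDist_convexHull_le_hausdorffEDist {s t : Set X} {x : X} (hx : x ∈ convexHull ℝ s) :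
    infEDist x (convexHull ℝ t) ≤ hausdorffEDist s t := by
  rcases eq_or_ne (hausdorffEDist s t) ⊤ with h | h
  · exact h ▸ le_top
  · have hst : s ⊆ cthickening (hausdorffEDist s t).toReal t :=
      subset_cthickening_of_hausdorffEDist_le (ENNReal.ofReal_toReal h).ge
    simpa only [mem_cthickening_iff, ENNReal.ofReal_toReal h] using
      convexHull_subset_cthickening_convexHull hst hx

lemma hausdorffEDist_convexHull_le (s t : Set X) :
    hausdorffEDist (convexHull ℝ s) (convexHull ℝ t) ≤ hausdorffEDist s t :=
  hausdorffEDist_le_of_infEDist (fun _ hx => infEDist_convexHull_le_hausdorffEDist hx)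
    (fun _ hx => hausdorffEDist_comm (s := s) ▸ infEDist_convexHull_le_hausdorffEDist hx)

lemma IsClosed.convex_of_tendsto_hausdorffEDist {ι : Type*} {l : Filter ι} [l.NeBot]
    {A : Set X} (hA : IsClosed A) {C : ι → Set X} (hC : ∀ i, Convex ℝ (C i))
    (h : Tendsto (fun i => hausdorffEDist (C i) A) l (nhds 0)) : Convex ℝ A := by
  suffices convexHull ℝ A ⊆ closure A by
    rw [hA.closure_eq] at this
    exact convexHull_eq_self.1 (this.antisymm (subset_convexHull ℝ A))
  rw [closure_eq_iInter_cthickening]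
  refine subset_iInter₂ fun δ hδ => ?_
  obtain ⟨i, hi⟩ := (h.eventually (gt_mem_nhds (ENNReal.ofReal_pos.2 (half_pos hδ)))).exists
  have hAC : A ⊆ cthickening (δ / 2) (C i) :=
    subset_cthickening_of_hausdorffEDist_le (hausdorffEDist_comm (s := A) ▸ hi.le)
  have hCA : C i ⊆ cthickening (δ / 2) A := subset_cthickening_of_hausdorffEDist_le hi.le
  calc convexHull ℝ A ⊆ cthickening (δ / 2) (C i) := convexHull_min hAC ((hC i).cthickening _)
    _ ⊆ cthickening (δ / 2) (cthickening (δ / 2) A) := cthickening_subset_of_subset _ hCA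
    _ ⊆ cthickening (δ / 2 + δ / 2) A :=
      cthickening_cthickening_subset (half_pos hδ).le (half_pos hδ).le _
    _ = cthickening δ A := by rw [add_halves]

end NormedSpace

theorem limitSets_subset_convexHull_iff_forall_convex_general
    {X : Type*} [NormedAddCommGroup X] [NormedSpace ℝ X]
    (F : ℝ → Set X) :
    limitSets F ⊆ limitSets (fun t => convexHull ℝ (F t)) ↔
      ∀ A ∈ limitSets F, Convex ℝ A := by
  constructor
  · intro hsub A hA
    obtain ⟨-, hAcl, P, -, hlim⟩ := hsub hA
    refine hAcl.convex_of_tendsto_hausdorffEDist (fun k => ?_) hlim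
    rw [msum_convexHull]
    exact convex_convexHull ℝ _
  · intro hconv A hA
    have hAconv := hconv A hA
    obtain ⟨hAne, hAcl, P, hmesh, hlim⟩ := hA
    refine ⟨hAne, hAcl, P, hmesh,
      tendsto_of_tendsto_of_tendsto_of_le_of_le tendsto_const_nhds hlim (fun _ => zero_le)
        fun k => ?_⟩
    have key := hausdorffEDist_convexHull_le (msum F (P k)) A
    rwa [hAconv.convexHull_eq, ← msum_convexHull] at key

/-- For a bounded multifunction `F` on `[0,1]` with values in a Banach space,
`I(F) ⊆ I(conv F)` holds if and only if every element of `I(F)` is convex. -/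
theorem limitSets_subset_convexHull_iff_forall_convex
    {X : Type*} [NormedAddCommGroup X] [NormedSpace ℝ X] [CompleteSpace X]
    (F : ℝ → Set X)
    (hFne : ∀ t ∈ Set.Icc (0 : ℝ) 1, (F t).Nonempty)
    (hFbdd : ∃ M : ℝ, ∀ t ∈ Set.Icc (0 : ℝ) 1, ∀ a ∈ F t, ‖a‖ ≤ M) :
    limitSets F ⊆ limitSets (fun t => convexHull ℝ (F t)) ↔
      ∀ A ∈ limitSets F, Convex ℝ A :=
  limitSets_subset_convexHull_iff_forall_convex_general F
end

section
/- Let X be a real Banach space and let f : [0,1] → X be a function whose image f([0,1]) is totally bounded. Then I(f) is a convex subset of X. -/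
open Pointwise Filter Metric Set

/-- Riemann integral sum of a (single-valued) function. -/
noncomputable def rsum {X : Type*} [NormedAddCommGroup X] [NormedSpace ℝ X]
    (f : ℝ → X) (P : TaggedPartition) : X :=
  ∑ i : Fin P.n, (P.pt i.succ - P.pt i.castSucc) • f (P.tag i)

/-- The set `I(f)` of limits of Riemann integral sums of a function `f` along sequences
of tagged partitions whose diameters tend to `0`. -/
def limitPoints {X : Type*} [NormedAddCommGroup X] [NormedSpace ℝ X]
    (f : ℝ → X) : Set X :=
  {x | ∃ P : ℕ → TaggedPartition,
    Tendsto (fun k => (P k).mesh) atTop (nhds 0) ∧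
    Tendsto (fun k => rsum f (P k)) atTop (nhds x)}

/-!
Fix `x, y ∈ I(f)` and `a ∈ [0, 1]`, and approximate `x`, `y` by Riemann sums over fine tagged
partitions `P`, `Q`. Cutting both at the points `j / N` changes their sums by `O(N · mesh)` and
splits them into blocks `P_j`, `Q_j` over `[j / N, (j + 1) / N]`; a partition `R` is assembled by
choosing, for each `j`, either `P_j` or `Q_j`. As `f([0, 1])` is totally bounded, `f` is uniformly
close to `T ∘ ψ` with `T` a continuous linear map on a finite-dimensional Euclidean space and
`‖ψ‖ ≤ 1`, so it suffices to make `S(ψ, R) - (a S(ψ, P) + (1 - a) S(ψ, Q))` small in that Hilbert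
space. Choosing the blocks greedily, each choice adds at most `‖S(ψ, P_j) - S(ψ, Q_j)‖² ≤ 4 / N²` to
the squared norm of this defect, which therefore stays below `4 / N`.
-/

section Selection

variable {E : Type*} [NormedAddCommGroup E] [InnerProductSpace ℝ E] {a : ℝ}

theorem norm_add_sub_convexCombo_sq_le (ha₀ : 0 ≤ a) (ha₁ : a ≤ 1) (D x y : E) :
    ‖D + (x - (a • x + (1 - a) • y))‖ ^ 2 ≤ ‖D‖ ^ 2 + ‖x - y‖ ^ 2 ∨
      ‖D + (y - (a • x + (1 - a) • y))‖ ^ 2 ≤ ‖D‖ ^ 2 + ‖x - y‖ ^ 2 := by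
  have hx : x - (a • x + (1 - a) • y) = (1 - a) • (x - y) := by module
  have hy : y - (a • x + (1 - a) • y) = -a • (x - y) := by module
  rw [hx, hy, norm_add_sq_real, norm_add_sq_real, inner_smul_right, inner_smul_right,
    norm_smul, norm_smul, Real.norm_eq_abs, Real.norm_eq_abs, mul_pow, mul_pow, sq_abs, sq_abs]
  rcases le_total (inner ℝ D (x - y)) 0 with h | h
  · left
    nlinarith [mul_nonneg (sub_nonneg.2 ha₁) (neg_nonneg.2 h),
      mul_nonneg (mul_nonneg ha₀ (by linarith : 0 ≤ 2 - a)) (sq_nonneg ‖x - y‖)]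
  · right
    nlinarith [mul_nonneg ha₀ h,
      mul_nonneg (mul_nonneg (sub_nonneg.2 ha₁) (by linarith : 0 ≤ 1 + a)) (sq_nonneg ‖x - y‖)]

theorem exists_forall₂_norm_add_sq_le {β : Type*} (φ : β → E) (ha₀ : 0 ≤ a) (ha₁ : a ≤ 1) :
    ∀ (bs : List (β × β)) (D : E), ∃ rs : List β,
      List.Forall₂ (fun r b => r = b.1 ∨ r = b.2) rs bs ∧
      ‖D + ((rs.map φ).sum -
          (a • (bs.map fun b => φ b.1).sum + (1 - a) • (bs.map fun b => φ b.2).sum))‖ ^ 2 ≤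
        ‖D‖ ^ 2 + (bs.map fun b => ‖φ b.1 - φ b.2‖ ^ 2).sum
  | [], D => ⟨[], .nil, by simp⟩
  | b :: bs, D => by
    obtain ⟨r, hr, hstep⟩ : ∃ r, (r = b.1 ∨ r = b.2) ∧
        ‖D + (φ r - (a • φ b.1 + (1 - a) • φ b.2))‖ ^ 2 ≤ ‖D‖ ^ 2 + ‖φ b.1 - φ b.2‖ ^ 2 := by
      rcases norm_add_sub_convexCombo_sq_le ha₀ ha₁ D (φ b.1) (φ b.2) with h | h
      exacts [⟨b.1, .inl rfl, h⟩, ⟨b.2, .inr rfl, h⟩]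
    obtain ⟨rs, hrs, hsum⟩ := exists_forall₂_norm_add_sq_le φ ha₀ ha₁ bs
      (D + (φ r - (a • φ b.1 + (1 - a) • φ b.2)))
    refine ⟨r :: rs, .cons hr hrs, ?_⟩
    simp only [List.map_cons, List.sum_cons]
    calc _ = ‖D + (φ r - (a • φ b.1 + (1 - a) • φ b.2)) + ((rs.map φ).sum -
          (a • (bs.map fun b => φ b.1).sum + (1 - a) • (bs.map fun b => φ b.2).sum))‖ ^ 2 := by
          congr 2; module
      _ ≤ _ := hsum
      _ ≤ _ := by linarith

end Selection

theorem norm_smul_add_smul_le {X : Type*} [NormedAddCommGroup X] [NormedSpace ℝ X] {a b : ℝ}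
    (ha : 0 ≤ a) (hb : 0 ≤ b) (x y : X) : ‖a • x + b • y‖ ≤ a * ‖x‖ + b * ‖y‖ :=
  (norm_add_le _ _).trans_eq (by rw [norm_smul_of_nonneg ha, norm_smul_of_nonneg hb])

theorem norm_sub_convexCombo_le {X : Type*} [NormedAddCommGroup X] [NormedSpace ℝ X] {a : ℝ}
    (ha₀ : 0 ≤ a) (ha₁ : a ≤ 1) (z u v x y : X) :
    ‖z - (a • x + (1 - a) • y)‖ ≤
      ‖z - (a • u + (1 - a) • v)‖ + (a * ‖u - x‖ + (1 - a) * ‖v - y‖) := by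
  calc _ ≤ ‖z - (a • u + (1 - a) • v)‖ + ‖a • u + (1 - a) • v - (a • x + (1 - a) • y)‖ :=
        norm_sub_le_norm_sub_add_norm_sub _ _ _
    _ = ‖z - (a • u + (1 - a) • v)‖ + ‖a • (u - x) + (1 - a) • (v - y)‖ := by congr 2; module
    _ ≤ _ := add_le_add le_rfl (norm_smul_add_smul_le ha₀ (sub_nonneg.2 ha₁) _ _)

theorem TotallyBounded.exists_euclideanSpace_approx {X α : Type*} [NormedAddCommGroup X]
    [NormedSpace ℝ X] {g : α → X} (hg : TotallyBounded (range g)) {ε : ℝ} (hε : 0 < ε) :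
    ∃ (ι : Finset X) (T : EuclideanSpace ℝ ι →L[ℝ] X) (ψ : α → EuclideanSpace ℝ ι),
      (∀ a, ‖ψ a‖ ≤ 1) ∧ ∀ a, ‖g a - T (ψ a)‖ ≤ ε := by
  classical
  obtain ⟨t, ht, hcover⟩ := Metric.totallyBounded_iff.1 hg ε hε
  have hnear : ∀ a, ∃ p : ht.toFinset, dist (g a) p < ε := fun a => by
    obtain ⟨p, hp, hdist⟩ := mem_iUnion₂.1 (hcover (mem_range_self a))
    exact ⟨⟨p, ht.mem_toFinset.2 hp⟩, hdist⟩
  choose κ hκ using hnear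
  let b := EuclideanSpace.basisFun ht.toFinset ℝ
  refine ⟨ht.toFinset, LinearMap.toContinuousLinearMap (b.toBasis.constr ℝ fun p => (p : X)),
    fun a => b (κ a), fun a => (b.orthonormal.1 _).le, fun a => ?_⟩
  simpa [← dist_eq_norm, b] using (hκ a).le

namespace TaggedList

/-- `IsTagged δ s t l`: the list `l` of pairs (length, tag) describes a tagged partition of
`[s, t]` into consecutive segments of length at most `δ`. -/
def IsTagged (δ : ℝ) : ℝ → ℝ → List (ℝ × ℝ) → Prop
  | s, t, [] => s = t
  | s, t, e :: l => 0 ≤ e.1 ∧ e.1 ≤ δ ∧ e.2 ∈ Icc s (s + e.1) ∧ IsTagged δ (s + e.1) t l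

variable {X : Type*}

section Module

variable [AddCommGroup X] [Module ℝ X]

def riemannSum (F : ℝ → X) (l : List (ℝ × ℝ)) : X := (l.map fun e => e.1 • F e.2).sum

@[simp] theorem riemannSum_nil (F : ℝ → X) : riemannSum F [] = 0 := rfl

@[simp] theorem riemannSum_cons (F : ℝ → X) (e : ℝ × ℝ) (l : List (ℝ × ℝ)) :
    riemannSum F (e :: l) = e.1 • F e.2 + riemannSum F l := List.sum_cons

@[simp] theorem riemannSum_append (F : ℝ → X) (l₁ l₂ : List (ℝ × ℝ)) :
    riemannSum F (l₁ ++ l₂) = riemannSum F l₁ + riemannSum F l₂ := by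
  simp [riemannSum]

theorem riemannSum_flatten (F : ℝ → X) (bs : List (List (ℝ × ℝ))) :
    riemannSum F bs.flatten = (bs.map (riemannSum F)).sum := by
  induction bs with
  | nil => rfl
  | cons b bs ih => simp [ih]

theorem riemannSum_sub (F G : ℝ → X) (l : List (ℝ × ℝ)) :
    riemannSum (fun t => F t - G t) l = riemannSum F l - riemannSum G l := by
  induction l with
  | nil => simp
  | cons e l ih => simp only [riemannSum_cons, ih, smul_sub]; abel

theorem map_riemannSum {E 𝓕 : Type*} [AddCommGroup E] [Module ℝ E] [FunLike 𝓕 E X]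
    [LinearMapClass 𝓕 ℝ E X] (T : 𝓕) (ψ : ℝ → E) (l : List (ℝ × ℝ)) :
    T (riemannSum ψ l) = riemannSum (fun t => T (ψ t)) l := by
  induction l with
  | nil => simp
  | cons e l ih => simp [ih]

end Module

variable [NormedAddCommGroup X] [NormedSpace ℝ X] {δ h : ℝ}

theorem IsTagged.append {t u : ℝ} :
    ∀ {s : ℝ} {l₁ l₂ : List (ℝ × ℝ)}, IsTagged δ s t l₁ → IsTagged δ t u l₂ →
      IsTagged δ s u (l₁ ++ l₂)
  | _, [], _, rfl, h₂ => h₂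
  | _, _ :: _, _, ⟨h0, hδ, hτ, h₁⟩, h₂ => ⟨h0, hδ, hτ, h₁.append h₂⟩

theorem IsTagged.norm_riemannSum_le {F : ℝ → X} {K t : ℝ} (hF : ∀ τ, ‖F τ‖ ≤ K) :
    ∀ {s : ℝ} {l : List (ℝ × ℝ)}, IsTagged δ s t l → ‖riemannSum F l‖ ≤ K * (t - s)
  | _, [], rfl => by simp
  | s, e :: l, ⟨h0, _, _, hl⟩ => by
    calc ‖riemannSum F (e :: l)‖ ≤ e.1 * ‖F e.2‖ + ‖riemannSum F l‖ := by
          rw [riemannSum_cons, ← norm_smul_of_nonneg h0]; exact norm_add_le _ _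
      _ ≤ e.1 * K + K * (t - (s + e.1)) :=
          add_le_add (mul_le_mul_of_nonneg_left (hF _) h0) (hl.norm_riemannSum_le hF)
      _ = K * (t - s) := by ring

/-- Cuts a tagged list starting at `s` at the point `u`: the segment straddling `u` is cut in
two, and the piece not containing its tag is tagged at `u`. -/
noncomputable def splitAt (u : ℝ) : ℝ → List (ℝ × ℝ) → List (ℝ × ℝ) × List (ℝ × ℝ)
  | _, [] => ([], [])
  | s, e :: l =>
    if s + e.1 ≤ u then (e :: (splitAt u (s + e.1) l).1, (splitAt u (s + e.1) l).2)
    else ([(u - s, min e.2 u)], (s + e.1 - u, max e.2 u) :: l)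

theorem IsTagged.isTagged_splitAt {u : ℝ} :
    ∀ {s t : ℝ} {l : List (ℝ × ℝ)}, IsTagged δ s t l → s ≤ u → u ≤ t →
      IsTagged δ s u (splitAt u s l).1 ∧ IsTagged δ u t (splitAt u s l).2
  | _, _, [], rfl, hsu, hut => by
    obtain rfl := le_antisymm hsu hut
    exact ⟨rfl, rfl⟩
  | s, t, e :: l, ⟨h0, hδ, hτ, hl⟩, hsu, hut => by
    rw [TaggedList.splitAt]
    split_ifs with hc
    · exact ⟨⟨h0, hδ, hτ, (hl.isTagged_splitAt hc hut).1⟩, (hl.isTagged_splitAt hc hut).2⟩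
    · push Not at hc
      refine ⟨⟨by linarith, by linarith, ⟨le_min hτ.1 hsu, by simp⟩, add_sub_cancel s u⟩,
        ⟨by linarith, by linarith, ⟨le_max_right _ _, ?_⟩, ?_⟩⟩
      · simpa using ⟨hτ.2, hc.le⟩
      · simpa using hl

theorem norm_smul_min_add_smul_max_sub_le {g : ℝ → X} {M : ℝ} (hg : ∀ t, ‖g t‖ ≤ M)
    {a b : ℝ} (ha : 0 ≤ a) (hb : 0 ≤ b) (haδ : a ≤ δ) (hbδ : b ≤ δ) (τ u : ℝ) :
    ‖a • g (min τ u) + b • g (max τ u) - (a + b) • g τ‖ ≤ 2 * M * δ := by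
  have hosc : ‖g u - g τ‖ ≤ 2 * M := by linarith [norm_sub_le_of_le (hg u) (hg τ)]
  rcases le_total τ u with h | h
  · rw [min_eq_left h, max_eq_right h, show a • g τ + b • g u - (a + b) • g τ = b • (g u - g τ)
      by module, norm_smul_of_nonneg hb]
    nlinarith [norm_nonneg (g u - g τ)]
  · rw [min_eq_right h, max_eq_left h, show a • g u + b • g τ - (a + b) • g τ = a • (g u - g τ)
      by module, norm_smul_of_nonneg ha]
    nlinarith [norm_nonneg (g u - g τ)]

theorem IsTagged.norm_riemannSum_splitAt_sub_le {g : ℝ → X} {M u t : ℝ} (hg : ∀ t, ‖g t‖ ≤ M)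
    (hδ : 0 ≤ δ) : ∀ {s : ℝ} {l : List (ℝ × ℝ)}, IsTagged δ s t l → s ≤ u →
      ‖riemannSum g (splitAt u s l).1 + riemannSum g (splitAt u s l).2 - riemannSum g l‖ ≤
        2 * M * δ
  | _, [], _, _ => by
    have : 0 ≤ M := (norm_nonneg _).trans (hg 0)
    simp [TaggedList.splitAt]; positivity
  | s, e :: l, ⟨h0, hδe, _, hl⟩, hsu => by
    rw [TaggedList.splitAt]
    split_ifs with hc
    · simpa [add_assoc] using hl.norm_riemannSum_splitAt_sub_le hg hδ hc
    · push Not at hc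
      have := norm_smul_min_add_smul_max_sub_le (δ := δ) hg (sub_nonneg.2 hsu)
        (by linarith : 0 ≤ s + e.1 - u) (by linarith) (by linarith) e.2 u
      simp only [riemannSum_cons, riemannSum_nil, add_zero]
      convert this using 2
      rw [show u - s + (s + e.1 - u) = e.1 by ring]
      abel

noncomputable def chop (h : ℝ) : ℕ → ℝ → List (ℝ × ℝ) → List (List (ℝ × ℝ))
  | 0, _, l => [l]
  | k + 1, s, l => (splitAt (s + h) s l).1 :: chop h k (s + h) (splitAt (s + h) s l).2

def IsBlocks (δ h : ℝ) : ℝ → List (List (ℝ × ℝ)) → Prop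
  | _, [] => True
  | s, b :: bs => IsTagged δ s (s + h) b ∧ IsBlocks δ h (s + h) bs

theorem length_chop (h : ℝ) : ∀ (k : ℕ) (s : ℝ) (l : List (ℝ × ℝ)), (chop h k s l).length = k + 1
  | 0, _, _ => rfl
  | k + 1, _, _ => by simp [chop, length_chop h k]

theorem IsTagged.isBlocks_chop (hh : 0 ≤ h) :
    ∀ {k : ℕ} {s : ℝ} {l : List (ℝ × ℝ)}, IsTagged δ s (s + (k + 1) * h) l →
      IsBlocks δ h s (chop h k s l)
  | 0, _, _, hl => ⟨by simpa using hl, trivial⟩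
  | k + 1, s, _, hl => by
    have hsplit := hl.isTagged_splitAt (u := s + h) (by linarith) (by push_cast; nlinarith)
    refine ⟨hsplit.1, IsTagged.isBlocks_chop hh ?_⟩
    convert hsplit.2 using 1
    push_cast; ring

theorem IsTagged.norm_riemannSum_flatten_chop_sub_le {g : ℝ → X} {M : ℝ} (hg : ∀ t, ‖g t‖ ≤ M)
    (hδ : 0 ≤ δ) (hh : 0 ≤ h) :
    ∀ {k : ℕ} {s : ℝ} {l : List (ℝ × ℝ)}, IsTagged δ s (s + (k + 1) * h) l →
      ‖riemannSum g (chop h k s l).flatten - riemannSum g l‖ ≤ k * (2 * M * δ)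
  | 0, _, _, _ => by simp [chop]
  | k + 1, s, l, hl => by
    have hsplit := hl.isTagged_splitAt (u := s + h) (by linarith) (by push_cast; nlinarith)
    have hrest : IsTagged δ (s + h) (s + h + (k + 1) * h) (splitAt (s + h) s l).2 := by
      convert hsplit.2 using 1
      push_cast; ring
    have hcut := hl.norm_riemannSum_splitAt_sub_le (u := s + h) hg hδ (by linarith)
    have hchop := hrest.norm_riemannSum_flatten_chop_sub_le hg hδ hh
    simp only [chop, List.flatten_cons, riemannSum_append]
    calc _ = ‖(riemannSum g (splitAt (s + h) s l).1 + riemannSum g (splitAt (s + h) s l).2 -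
            riemannSum g l) + (riemannSum g (chop h k (s + h) (splitAt (s + h) s l).2).flatten -
            riemannSum g (splitAt (s + h) s l).2)‖ := by congr 1; abel
      _ ≤ 2 * M * δ + k * (2 * M * δ) := norm_add_le_of_le hcut hchop
      _ = _ := by push_cast; ring

theorem IsBlocks.isTagged_flatten :
    ∀ {s : ℝ} {bs : List (List (ℝ × ℝ))}, IsBlocks δ h s bs →
      IsTagged δ s (s + bs.length * h) bs.flatten
  | _, [], _ => by simp [IsTagged]
  | s, _ :: _, ⟨hb, hbs⟩ => by
    rw [List.flatten_cons]
    convert hb.append hbs.isTagged_flatten using 1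
    simp only [List.length_cons]; push_cast; ring

theorem IsBlocks.norm_riemannSum_le {F : ℝ → X} {K : ℝ} (hF : ∀ t, ‖F t‖ ≤ K) :
    ∀ {s : ℝ} {bs : List (List (ℝ × ℝ))}, IsBlocks δ h s bs → ∀ b ∈ bs, ‖riemannSum F b‖ ≤ K * h
  | _, [], _ => by simp
  | s, _ :: _, ⟨hb, hbs⟩ => by
    rintro b (_ | ⟨_, hmem⟩)
    · simpa using hb.norm_riemannSum_le hF
    · exact hbs.norm_riemannSum_le hF b hmem

theorem IsBlocks.of_forall₂ :
    ∀ {s : ℝ} {ps qs rs : List (List (ℝ × ℝ))}, IsBlocks δ h s ps → IsBlocks δ h s qs →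
      List.Forall₂ (fun r b => r = b.1 ∨ r = b.2) rs (ps.zip qs) → IsBlocks δ h s rs
  | _, [], _, _, _, _, hsel => by simp_all
  | _, _ :: _, [], _, _, _, hsel => by simp_all
  | _, _ :: _, _ :: _, _ :: _, ⟨hp, hps⟩, ⟨hq, hqs⟩, .cons hr hsel => by
    refine ⟨?_, hps.of_forall₂ hqs hsel⟩
    rcases hr with rfl | rfl
    exacts [hp, hq]

section Mixing

variable {E : Type*} [NormedAddCommGroup E] [InnerProductSpace ℝ E] {a s : ℝ}
  {ps qs : List (List (ℝ × ℝ))}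

theorem IsBlocks.exists_forall₂_norm_sub_le (ha₀ : 0 ≤ a) (ha₁ : a ≤ 1) {ψ : ℝ → E}
    (hψ : ∀ t, ‖ψ t‖ ≤ 1) (hps : IsBlocks δ h s ps) (hqs : IsBlocks δ h s qs)
    (hlen : ps.length = qs.length) :
    ∃ rs, List.Forall₂ (fun r b => r = b.1 ∨ r = b.2) rs (ps.zip qs) ∧
      ‖riemannSum ψ rs.flatten -
          (a • riemannSum ψ ps.flatten + (1 - a) • riemannSum ψ qs.flatten)‖ ≤
        √(ps.length * (2 * h) ^ 2) := by
  obtain ⟨rs, hsel, hrs⟩ := exists_forall₂_norm_add_sq_le (riemannSum ψ) ha₀ ha₁ (ps.zip qs) 0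
  refine ⟨rs, hsel, Real.le_sqrt_of_sq_le ?_⟩
  have hpair : ∀ b ∈ ps.zip qs, ‖riemannSum ψ b.1 - riemannSum ψ b.2‖ ^ 2 ≤ (2 * h) ^ 2 := by
    rintro ⟨p, q⟩ hb
    obtain ⟨hp, hq⟩ := List.of_mem_zip hb
    have := norm_sub_le_of_le (hps.norm_riemannSum_le hψ p hp) (hqs.norm_riemannSum_le hψ q hq)
    exact pow_le_pow_left₀ (norm_nonneg _) (by linarith) 2
  have hsum := List.sum_le_card_nsmul _ _ fun x hx => by
    obtain ⟨b, hb, rfl⟩ := List.mem_map.1 hx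
    exact hpair b hb
  rw [List.length_map, List.length_zip, ← hlen, min_self, nsmul_eq_mul] at hsum
  have hfst : ((ps.zip qs).map fun b => riemannSum ψ b.1) = ps.map (riemannSum ψ) := by
    conv_rhs => rw [← List.map_fst_zip hlen.le, List.map_map]
    rfl
  have hsnd : ((ps.zip qs).map fun b => riemannSum ψ b.2) = qs.map (riemannSum ψ) := by
    conv_rhs => rw [← List.map_snd_zip hlen.ge, List.map_map]
    rfl
  simp only [zero_add, norm_zero, hfst, hsnd] at hrs
  simp only [riemannSum_flatten]
  linarith

theorem IsBlocks.exists_norm_riemannSum_sub_le (ha₀ : 0 ≤ a) (ha₁ : a ≤ 1) (T : E →L[ℝ] X)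
    {ψ : ℝ → E} (hψ : ∀ t, ‖ψ t‖ ≤ 1) {g : ℝ → X} {ε : ℝ} (hgψ : ∀ t, ‖g t - T (ψ t)‖ ≤ ε)
    (hps : IsBlocks δ h s ps) (hqs : IsBlocks δ h s qs) (hlen : ps.length = qs.length) :
    ∃ rs, IsBlocks δ h s rs ∧ rs.length = ps.length ∧
      ‖riemannSum g rs.flatten -
          (a • riemannSum g ps.flatten + (1 - a) • riemannSum g qs.flatten)‖ ≤
        2 * ε * (ps.length * h) + ‖T‖ * √(ps.length * (2 * h) ^ 2) := by
  obtain ⟨rs, hsel, hψrs⟩ := hps.exists_forall₂_norm_sub_le ha₀ ha₁ hψ hqs hlen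
  have hrs_len : rs.length = ps.length := by
    rw [hsel.length_eq, List.length_zip, ← hlen, min_self]
  have hrs := hps.of_forall₂ hqs hsel
  refine ⟨rs, hrs, hrs_len, ?_⟩
  set e := fun t => g t - T (ψ t)
  have he : ∀ l, riemannSum g l = riemannSum e l + T (riemannSum ψ l) := fun l => by
    rw [riemannSum_sub, map_riemannSum, sub_add_cancel]
  have hbound : ∀ bs, IsBlocks δ h s bs → bs.length = ps.length →
      ‖riemannSum e bs.flatten‖ ≤ ε * (ps.length * h) := fun bs hbs hL => by
    simpa [hL] using hbs.isTagged_flatten.norm_riemannSum_le hgψ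
  calc _ = ‖(riemannSum e rs.flatten -
          (a • riemannSum e ps.flatten + (1 - a) • riemannSum e qs.flatten)) +
        T (riemannSum ψ rs.flatten -
          (a • riemannSum ψ ps.flatten + (1 - a) • riemannSum ψ qs.flatten))‖ := by
        simp only [he, map_sub, map_add, map_smul]; congr 1; module
    _ ≤ (ε * (ps.length * h) + (a * (ε * (ps.length * h)) + (1 - a) * (ε * (ps.length * h)))) +
        ‖T‖ * √(ps.length * (2 * h) ^ 2) :=
      norm_add_le_of_le (norm_sub_le_of_le (hbound rs hrs hrs_len)
        ((norm_smul_add_smul_le ha₀ (sub_nonneg.2 ha₁) _ _).trans (add_le_add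
          (mul_le_mul_of_nonneg_left (hbound ps hps rfl) ha₀)
          (mul_le_mul_of_nonneg_left (hbound qs hqs hlen.symm) (sub_nonneg.2 ha₁)))))
        ((T.le_opNorm _).trans (mul_le_mul_of_nonneg_left hψrs (norm_nonneg _)))
    _ = _ := by ring

end Mixing

theorem exists_riemannSum_near_convexCombo {g : ℝ → X} (hg : TotallyBounded (range g))
    {a : ℝ} (ha₀ : 0 ≤ a) (ha₁ : a ≤ 1) {ε : ℝ} (hε : 0 < ε) :
    ∃ δ₀ > 0, ∀ δ ∈ Ioc 0 δ₀, ∀ lP lQ, IsTagged δ 0 1 lP → IsTagged δ 0 1 lQ →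
      ∃ lR, IsTagged δ 0 1 lR ∧
        ‖riemannSum g lR - (a • riemannSum g lP + (1 - a) • riemannSum g lQ)‖ ≤ ε := by
  obtain ⟨M, hM⟩ : ∃ M, ∀ t, ‖g t‖ ≤ M := by
    simpa [forall_mem_range] using isBounded_iff_forall_norm_le.1 hg.isBounded
  have hM₀ : 0 ≤ M := (norm_nonneg _).trans (hM 0)
  obtain ⟨ι, T, ψ, hψ, hgψ⟩ := hg.exists_euclideanSpace_approx (show 0 < ε / 8 by positivity)
  obtain ⟨k, hk⟩ : ∃ k : ℕ, ‖T‖ * √(((k : ℝ) + 1) * (2 * (1 / ((k : ℝ) + 1))) ^ 2) ≤ ε / 4 := by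
    have : Tendsto (fun k : ℕ => ‖T‖ * √(4 * (1 / ((k : ℝ) + 1)))) atTop (nhds 0) := by
      simpa using tendsto_const_nhds.mul
        ((tendsto_one_div_add_atTop_nhds_zero_nat.const_mul 4).sqrt)
    obtain ⟨k, hk⟩ := (this.eventually (ge_mem_nhds (by positivity : 0 < ε / 4))).exists
    refine ⟨k, le_of_eq_of_le ?_ hk⟩
    field_simp
    norm_num
  -- `k + 1` blocks of width `h`; `δ₀` keeps the cutting error `k * (2 * M * δ)` below `ε / 8`
  set h : ℝ := 1 / ((k : ℝ) + 1)
  have hh : 0 ≤ h := by positivity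
  have hkh : ((k : ℝ) + 1) * h = 1 := by simp only [h]; field_simp
  refine ⟨ε / (16 * (M + 1) * (k + 1)), by positivity, fun δ ⟨hδ₀, hδ⟩ lP lQ hP hQ => ?_⟩
  have hchop : ∀ l, IsTagged δ 0 1 l → IsBlocks δ h 0 (chop h k 0 l) ∧
      ‖riemannSum g (chop h k 0 l).flatten - riemannSum g l‖ ≤ ε / 8 := fun l hl => by
    have hl' : IsTagged δ 0 (0 + (k + 1) * h) l := by rwa [zero_add, hkh]
    refine ⟨hl'.isBlocks_chop hh, (hl'.norm_riemannSum_flatten_chop_sub_le hM hδ₀.le hh).trans ?_⟩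
    rw [le_div_iff₀ (by positivity)] at hδ
    nlinarith [mul_le_mul (by linarith : (k : ℝ) ≤ k + 1) (by linarith : M ≤ M + 1) hM₀
      (by positivity)]
  obtain ⟨hPb, hPe⟩ := hchop lP hP
  obtain ⟨hQb, hQe⟩ := hchop lQ hQ
  obtain ⟨rs, hrs, hlen, hmix⟩ :=
    hPb.exists_norm_riemannSum_sub_le ha₀ ha₁ T hψ hgψ hQb (by simp [length_chop])
  rw [length_chop] at hlen hmix
  refine ⟨rs.flatten, ?_, ?_⟩
  · simpa [hlen, hkh] using hrs.isTagged_flatten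
  · push_cast at hmix
    rw [hkh] at hmix
    calc _ ≤ (2 * (ε / 8) * 1 + ε / 4) + (a * (ε / 8) + (1 - a) * (ε / 8)) :=
          (norm_sub_convexCombo_le ha₀ ha₁ _ _ _ _ _).trans (by gcongr; linarith)
      _ ≤ ε := by nlinarith

theorem isTagged_ofFn :
    ∀ {n : ℕ} (pt : Fin (n + 1) → ℝ) (tag : Fin n → ℝ), Monotone pt →
      (∀ i : Fin n, tag i ∈ Icc (pt i.castSucc) (pt i.succ)) →
      (∀ i : Fin n, pt i.succ - pt i.castSucc ≤ δ) →
      IsTagged δ (pt 0) (pt (Fin.last n))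
        (List.ofFn fun i : Fin n => (pt i.succ - pt i.castSucc, tag i))
  | 0, _, _, _, _, _ => rfl
  | n + 1, pt, tag, hmono, htag, hδ => by
    rw [List.ofFn_succ]
    refine ⟨sub_nonneg.2 (hmono (Fin.castSucc_le_succ 0)), hδ 0, by simpa using htag 0, ?_⟩
    have := isTagged_ofFn (fun i => pt i.succ) (fun i => tag i.succ)
      (hmono.comp fun _ _ => Fin.succ_le_succ_iff.2)
      (fun i => by simpa only [Fin.succ_castSucc] using htag i.succ)
      (fun i => by simpa only [Fin.succ_castSucc] using hδ i.succ)
    convert this using 1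
    · simp
    · rw [Fin.succ_last]
    · simp only [Fin.succ_castSucc]

theorem IsTagged.sum_map_fst {t : ℝ} :
    ∀ {s : ℝ} {l : List (ℝ × ℝ)}, IsTagged δ s t l → (l.map Prod.fst).sum = t - s
  | _, [], rfl => by simp
  | _, _ :: _, ⟨_, _, _, hl⟩ => by simp [hl.sum_map_fst]; ring

theorem IsTagged.getElem {t : ℝ} :
    ∀ {s : ℝ} {l : List (ℝ × ℝ)}, IsTagged δ s t l → ∀ (i : ℕ) (hi : i < l.length),
      0 ≤ l[i].1 ∧ l[i].1 ≤ δ ∧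
        l[i].2 ∈ Icc (s + ((l.map Prod.fst).take i).sum)
          (s + ((l.map Prod.fst).take i).sum + l[i].1)
  | _, _ :: _, ⟨h0, hδ, hτ, _⟩, 0, _ => by simpa using ⟨h0, hδ, hτ⟩
  | _, _ :: _, ⟨_, _, _, hl⟩, i + 1, hi => by
    simpa [add_assoc] using hl.getElem i (by simpa using hi)

theorem sum_take_map_fst_succ {l : List (ℝ × ℝ)} {i : ℕ} (hi : i < l.length) :
    ((l.map Prod.fst).take (i + 1)).sum = ((l.map Prod.fst).take i).sum + l[i].1 := by
  rw [List.sum_take_succ _ _ (by simpa using hi), List.getElem_map]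

noncomputable def toPartition (l : List (ℝ × ℝ)) (hl : IsTagged δ 0 1 l) : TaggedPartition where
  n := l.length
  pt i := ((l.map Prod.fst).take i).sum
  tag i := l[i].2
  pt_zero := by simp
  pt_last := by simpa [List.take_of_length_le] using hl.sum_map_fst
  pt_mono _ _ hij := (List.take_sublist_take_left hij).sum_le_sum fun _ he => by
    obtain ⟨e, he', rfl⟩ := List.mem_map.1 (List.mem_of_mem_take he)
    obtain ⟨i, hi, rfl⟩ := List.getElem_of_mem he'
    exact (hl.getElem i hi).1
  tag_mem i := by
    simpa [sum_take_map_fst_succ i.isLt] using (hl.getElem i i.isLt).2.2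

theorem mesh_toPartition_le {l : List (ℝ × ℝ)} (hl : IsTagged δ 0 1 l) :
    (toPartition l hl).mesh ≤ δ := by
  have hδ : 0 ≤ δ := by
    cases l with
    | nil => exact absurd hl (by norm_num [IsTagged])
    | cons e _ => exact hl.1.trans hl.2.1
  refine Real.iSup_le (fun i => ?_) hδ
  show ((l.map Prod.fst).take (i + 1)).sum - ((l.map Prod.fst).take i).sum ≤ δ
  linarith [sum_take_map_fst_succ i.isLt, (hl.getElem i i.isLt).2.1]

theorem rsum_toPartition (F : ℝ → X) {l : List (ℝ × ℝ)} (hl : IsTagged δ 0 1 l) :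
    rsum F (toPartition l hl) = riemannSum F l := by
  rw [riemannSum, ← Fin.sum_univ_fun_getElem]
  refine Finset.sum_congr rfl fun i _ => ?_
  show (((l.map Prod.fst).take (i + 1)).sum - ((l.map Prod.fst).take i).sum) • F l[i].2 = _
  rw [sum_take_map_fst_succ i.isLt, add_sub_cancel_left]
  rfl

end TaggedList

namespace TaggedPartition

def toList (P : TaggedPartition) : List (ℝ × ℝ) :=
  List.ofFn fun i : Fin P.n => (P.pt i.succ - P.pt i.castSucc, P.tag i)

theorem riemannSum_toList {X : Type*} [NormedAddCommGroup X] [NormedSpace ℝ X] (F : ℝ → X)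
    (P : TaggedPartition) : TaggedList.riemannSum F P.toList = rsum F P := by
  simp [toList, TaggedList.riemannSum, List.sum_ofFn, rsum]

theorem sub_le_mesh (P : TaggedPartition) (i : Fin P.n) :
    P.pt i.succ - P.pt i.castSucc ≤ P.mesh :=
  le_ciSup (f := fun i : Fin P.n => P.pt i.succ - P.pt i.castSucc) (Set.finite_range _).bddAbove i

theorem mesh_nonneg (P : TaggedPartition) : 0 ≤ P.mesh :=
  Real.iSup_nonneg fun i => sub_nonneg.2 (P.pt_mono (Fin.castSucc_le_succ i))

theorem isTagged_toList {P : TaggedPartition} {δ : ℝ} (h : P.mesh ≤ δ) :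
    TaggedList.IsTagged δ 0 1 P.toList := by
  simpa [toList, P.pt_zero, P.pt_last] using TaggedList.isTagged_ofFn P.pt P.tag P.pt_mono P.tag_mem
    fun i => (P.sub_le_mesh i).trans h

theorem tag_mem_Icc (P : TaggedPartition) (i : Fin P.n) : P.tag i ∈ Icc 0 1 :=
  ⟨P.pt_zero ▸ (P.pt_mono (Fin.zero_le _)).trans (P.tag_mem i).1,
    P.pt_last ▸ (P.tag_mem i).2.trans (P.pt_mono (Fin.le_last _))⟩

end TaggedPartition

theorem exists_rsum_near_convexCombo {X : Type*} [NormedAddCommGroup X] [NormedSpace ℝ X]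
    {f : ℝ → X} (hf : TotallyBounded (f '' Icc 0 1)) {a : ℝ} (ha₀ : 0 ≤ a) (ha₁ : a ≤ 1)
    {ε : ℝ} (hε : 0 < ε) :
    ∃ δ₀ > 0, ∀ δ ∈ Ioc 0 δ₀, ∀ P Q : TaggedPartition, P.mesh ≤ δ → Q.mesh ≤ δ →
      ∃ R : TaggedPartition, R.mesh ≤ δ ∧
        ‖rsum f R - (a • rsum f P + (1 - a) • rsum f Q)‖ ≤ ε := by
  set g := IccExtend zero_le_one fun t : Icc (0 : ℝ) 1 => f t
  have hg : TotallyBounded (range g) := by rwa [IccExtend_range, ← image_eq_range]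
  have hgf : ∀ P : TaggedPartition, rsum g P = rsum f P := fun P =>
    Finset.sum_congr rfl fun i _ => by simp [g, IccExtend_of_mem _ _ (P.tag_mem_Icc i)]
  obtain ⟨δ₀, hδ₀, hlist⟩ := TaggedList.exists_riemannSum_near_convexCombo hg ha₀ ha₁ hε
  refine ⟨δ₀, hδ₀, fun δ hδ P Q hP hQ => ?_⟩
  obtain ⟨l, hl, hR⟩ := hlist δ hδ _ _ (TaggedPartition.isTagged_toList hP)
    (TaggedPartition.isTagged_toList hQ)
  refine ⟨TaggedList.toPartition l hl, TaggedList.mesh_toPartition_le hl, ?_⟩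
  simpa only [← hgf, TaggedList.rsum_toPartition, TaggedPartition.riemannSum_toList] using hR

theorem mem_limitPoints_iff {X : Type*} [NormedAddCommGroup X] [NormedSpace ℝ X] {f : ℝ → X}
    {x : X} : x ∈ limitPoints f ↔
      ∀ δ > 0, ∀ ε > 0, ∃ P : TaggedPartition, P.mesh ≤ δ ∧ ‖rsum f P - x‖ ≤ ε := by
  constructor
  · rintro ⟨P, hmesh, hsum⟩ δ hδ ε hε
    obtain ⟨k, hkδ, hkε⟩ := ((hmesh.eventually (ge_mem_nhds hδ)).and
      ((tendsto_iff_norm_sub_tendsto_zero.1 hsum).eventually (ge_mem_nhds hε))).exists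
    exact ⟨P k, hkδ, hkε⟩
  · intro h
    choose P hmesh hsum using fun k : ℕ =>
      h (1 / (k + 1)) Nat.one_div_pos_of_nat (1 / (k + 1)) Nat.one_div_pos_of_nat
    exact ⟨P, squeeze_zero (fun k => (P k).mesh_nonneg) hmesh
      tendsto_one_div_add_atTop_nhds_zero_nat, tendsto_iff_norm_sub_tendsto_zero.2 <|
        squeeze_zero (fun _ => norm_nonneg _) hsum tendsto_one_div_add_atTop_nhds_zero_nat⟩

theorem convex_limitPoints_of_totallyBounded_image_general
    {X : Type*} [NormedAddCommGroup X] [NormedSpace ℝ X]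
    (f : ℝ → X) (htb : TotallyBounded (f '' Set.Icc (0 : ℝ) 1)) :
    Convex ℝ (limitPoints f) := by
  intro x hx y hy a b ha hb hab
  obtain rfl : b = 1 - a := by linarith
  rw [mem_limitPoints_iff] at hx hy ⊢
  intro δ hδ ε hε
  obtain ⟨δ₀, hδ₀, hmix⟩ := exists_rsum_near_convexCombo htb ha (by linarith) (half_pos hε)
  have hη : min δ δ₀ ∈ Ioc 0 δ₀ := ⟨lt_min hδ hδ₀, min_le_right _ _⟩
  obtain ⟨P, hPη, hP⟩ := hx _ hη.1 _ (half_pos hε)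
  obtain ⟨Q, hQη, hQ⟩ := hy _ hη.1 _ (half_pos hε)
  obtain ⟨R, hRη, hR⟩ := hmix _ hη P Q hPη hQη
  refine ⟨R, hRη.trans (min_le_left _ _), ?_⟩
  calc _ ≤ ε / 2 + (a * (ε / 2) + (1 - a) * (ε / 2)) :=
        (norm_sub_convexCombo_le ha (by linarith) _ _ _ _ _).trans (by gcongr)
    _ = ε := by ring

/-- If `f : [0,1] → X` has totally bounded image in a Banach space `X`,
then `I(f)` is convex. -/
theorem convex_limitPoints_of_totallyBounded_image
    {X : Type*} [NormedAddCommGroup X] [NormedSpace ℝ X] [CompleteSpace X]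
    (f : ℝ → X) (htb : TotallyBounded (f '' Set.Icc (0 : ℝ) 1)) :
    Convex ℝ (limitPoints f) :=
  convex_limitPoints_of_totallyBounded_image_general f htb
end
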